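/- Let p₀ ∈ U and let λ ∈ ℝ⁴ be a nonzero lightlike vector. Then (∂h_λ/∂x)(p₀) = (∂h_λ/∂y)(p₀) = 0 together with det 𝓗(h_λ)(p₀) = 0 (where 𝓗(h_λ) is the Hessian matrix of h_λ in the coordinates (x,y)) holds if and only if there exists σ ∈ {+1, −1} such that λ is a nonzero real scalar multiple of (e₁+σe₂)(p₀) and the lightlike Gauss–Kronecker curvature K_l(1,σ) vanishes at p₀. -/

import Mathlib

noncomputable section

def pprod (x y : Fin 4 → ℝ) : ℝ :=
  -(x 0 * y 0) - x 1 * y 1 + x 2 * y 2 + x 3 * y 3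

def pdx (f : ℝ × ℝ → ℝ) (p : ℝ × ℝ) : ℝ := fderiv ℝ f p (1, 0)
def pdy (f : ℝ × ℝ → ℝ) (p : ℝ × ℝ) : ℝ := fderiv ℝ f p (0, 1)

def Dx (X : ℝ × ℝ → Fin 4 → ℝ) (p : ℝ × ℝ) : Fin 4 → ℝ := fderiv ℝ X p (1, 0)
def Dy (X : ℝ × ℝ → Fin 4 → ℝ) (p : ℝ × ℝ) : Fin 4 → ℝ := fderiv ℝ X p (0, 1)
def Dxx (X : ℝ × ℝ → Fin 4 → ℝ) (p : ℝ × ℝ) : Fin 4 → ℝ := Dx (Dx X) p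
def Dxy (X : ℝ × ℝ → Fin 4 → ℝ) (p : ℝ × ℝ) : Fin 4 → ℝ := Dy (Dx X) p
def Dyy (X : ℝ × ℝ → Fin 4 → ℝ) (p : ℝ × ℝ) : Fin 4 → ℝ := Dy (Dy X) p

def detHess (f : ℝ × ℝ → ℝ) (p : ℝ × ℝ) : ℝ :=
  pdx (pdx f) p * pdy (pdy f) p - (pdy (pdx f) p) ^ 2

def IsLorentzSurface (U : Set (ℝ × ℝ)) (X : ℝ × ℝ → Fin 4 → ℝ) : Prop :=
  IsOpen U ∧ ContDiffOn ℝ (⊤ : ℕ∞) X U ∧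
    ∀ p ∈ U,
      pprod (Dx X p) (Dx X p) * pprod (Dy X p) (Dy X p) - (pprod (Dx X p) (Dy X p)) ^ 2 < 0

def IsNormalFrame (U : Set (ℝ × ℝ)) (X e1 e2 : ℝ × ℝ → Fin 4 → ℝ) : Prop :=
  ContDiffOn ℝ (⊤ : ℕ∞) e1 U ∧ ContDiffOn ℝ (⊤ : ℕ∞) e2 U ∧
    ∀ p ∈ U,
      pprod (e1 p) (e1 p) = -1 ∧ pprod (e2 p) (e2 p) = 1 ∧ pprod (e1 p) (e2 p) = 0 ∧
      pprod (e1 p) (Dx X p) = 0 ∧ pprod (e1 p) (Dy X p) = 0 ∧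
      pprod (e2 p) (Dx X p) = 0 ∧ pprod (e2 p) (Dy X p) = 0

def xi (e1 e2 : ℝ × ℝ → Fin 4 → ℝ) (σ : ℝ) (p : ℝ × ℝ) : ℝ :=
  Real.sqrt ((e1 p 0 + σ * e2 p 0) ^ 2 + (e1 p 1 + σ * e2 p 1) ^ 2)

def LG (e1 e2 : ℝ × ℝ → Fin 4 → ℝ) (σ : ℝ) (p : ℝ × ℝ) : Fin 4 → ℝ :=
  (xi e1 e2 σ p)⁻¹ • (e1 p + σ • e2 p)

def KlVanish (X e1 e2 : ℝ × ℝ → Fin 4 → ℝ) (σ : ℝ) (p : ℝ × ℝ) : Prop :=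
  pprod (Dxx X p) (e1 p + σ • e2 p) * pprod (Dyy X p) (e1 p + σ • e2 p)
    - (pprod (Dxy X p) (e1 p + σ • e2 p)) ^ 2 = 0

/-! ### Auxiliary lemmas -/

set_option maxHeartbeats 1000000

open Matrix in
lemma det4 (A : Matrix (Fin 4) (Fin 4) ℝ) : A.det =
    A 0 0 * (A 1 1 * (A 2 2 * A 3 3 - A 2 3 * A 3 2) - A 1 2 * (A 2 1 * A 3 3 - A 2 3 * A 3 1)
      + A 1 3 * (A 2 1 * A 3 2 - A 2 2 * A 3 1))
    - A 0 1 * (A 1 0 * (A 2 2 * A 3 3 - A 2 3 * A 3 2) - A 1 2 * (A 2 0 * A 3 3 - A 2 3 * A 3 0)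
      + A 1 3 * (A 2 0 * A 3 2 - A 2 2 * A 3 0))
    + A 0 2 * (A 1 0 * (A 2 1 * A 3 3 - A 2 3 * A 3 1) - A 1 1 * (A 2 0 * A 3 3 - A 2 3 * A 3 0)
      + A 1 3 * (A 2 0 * A 3 1 - A 2 1 * A 3 0))
    - A 0 3 * (A 1 0 * (A 2 1 * A 3 2 - A 2 2 * A 3 1) - A 1 1 * (A 2 0 * A 3 2 - A 2 2 * A 3 0)
      + A 1 2 * (A 2 0 * A 3 1 - A 2 1 * A 3 0)) := by
  rw [Matrix.det_succ_row_zero]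
  simp [Fin.sum_univ_succ, Matrix.det_fin_three, Fin.succAbove,
    show (Fin.succ 2 : Fin 4) = 3 by decide, show (Fin.castSucc 2 : Fin 4) = 2 by decide,
    show (Fin.castSucc 1 : Fin 4) = 1 by decide]
  ring

open Matrix in
lemma span_lemma (a b c d v : Fin 4 → ℝ)
    (hG : pprod a a * pprod b b - (pprod a b) ^ 2 < 0)
    (hcc : pprod c c = -1) (hdd : pprod d d = 1) (hcd : pprod c d = 0)
    (hca : pprod c a = 0) (hcb : pprod c b = 0) (hda : pprod d a = 0) (hdb : pprod d b = 0)
    (hva : pprod v a = 0) (hvb : pprod v b = 0) (hvc : pprod v c = 0) (hvd : pprod v d = 0) :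
    v = 0 := by
  set J : Matrix (Fin 4) (Fin 4) ℝ := !![-1,0,0,0; 0,-1,0,0; 0,0,1,0; 0,0,0,1] with hJ
  set M : Matrix (Fin 4) (Fin 4) ℝ :=
    !![a 0, a 1, a 2, a 3; b 0, b 1, b 2, b 3; c 0, c 1, c 2, c 3; d 0, d 1, d 2, d 3] with hM
  unfold pprod at hG hcc hdd hcd hca hcb hda hdb hva hvb hvc hvd
  have hGram : M * J * Mᵀ =
      !![-(a 0 * a 0) - a 1 * a 1 + a 2 * a 2 + a 3 * a 3,
         -(a 0 * b 0) - a 1 * b 1 + a 2 * b 2 + a 3 * b 3, 0, 0;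
         -(a 0 * b 0) - a 1 * b 1 + a 2 * b 2 + a 3 * b 3,
         -(b 0 * b 0) - b 1 * b 1 + b 2 * b 2 + b 3 * b 3, 0, 0;
         0, 0, -1, 0; 0, 0, 0, 1] := by
    ext i j
    fin_cases i <;> fin_cases j <;>
      simp [hM, hJ, Matrix.mul_apply, Fin.sum_univ_four, Matrix.vecHead, Matrix.vecTail] <;>
      linarith [hcc, hdd, hcd, hca, hcb, hda, hdb]
  have hdetJ : J.det = 1 := by rw [det4]; norm_num [hJ, Matrix.cons_val_three, Matrix.cons_val_two, Matrix.vecHead, Matrix.vecTail]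
  have hdetG : (M * J * Mᵀ).det =
      -((-(a 0 * a 0) - a 1 * a 1 + a 2 * a 2 + a 3 * a 3) *
          (-(b 0 * b 0) - b 1 * b 1 + b 2 * b 2 + b 3 * b 3) -
        (-(a 0 * b 0) - a 1 * b 1 + a 2 * b 2 + a 3 * b 3) ^ 2) := by
    rw [hGram, det4]
    norm_num [Matrix.cons_val_three, Matrix.cons_val_two, Matrix.vecHead, Matrix.vecTail]
    ring
  have hdetM : M.det ≠ 0 := by
    intro h
    have h0 : (M * J * Mᵀ).det = 0 := by
      rw [Matrix.det_mul, Matrix.det_mul, h, Matrix.det_transpose, h]; ring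
    rw [hdetG] at h0
    nlinarith [hG]
  have hNdet : (M * J).det ≠ 0 := by
    rw [Matrix.det_mul, hdetJ, mul_one]; exact hdetM
  have hinj : Function.Injective ((M * J).mulVec) :=
    Matrix.mulVec_injective_iff_isUnit.2 ((Matrix.isUnit_iff_isUnit_det _).2 hNdet.isUnit)
  have hv0 : (M * J).mulVec v = (M * J).mulVec 0 := by
    rw [Matrix.mulVec_zero]
    funext i
    fin_cases i <;>
      simp [hM, hJ, Matrix.mulVec, Matrix.mul_apply, dotProduct, Fin.sum_univ_four,
        Matrix.vecHead, Matrix.vecTail] <;>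
      linarith [hva, hvb, hvc, hvd]
  exact hinj hv0

lemma pprod_comm (x y : Fin 4 → ℝ) : pprod x y = pprod y x := by unfold pprod; ring
lemma pprod_smul_right (x u : Fin 4 → ℝ) (c : ℝ) : pprod x (c • u) = c * pprod x u := by
  simp [pprod]; ring
lemma pprod_right_comb (x u v : Fin 4 → ℝ) (μ σ : ℝ) :
    pprod x (μ • (u + σ • v)) = μ * (pprod x u + σ * pprod x v) := by
  simp [pprod]; ring
lemma pprod_sub_comb (w x u v : Fin 4 → ℝ) (α β : ℝ) :
    pprod (x - α • u - β • v) w = pprod x w - α * pprod u w - β * pprod v w := by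
  simp [pprod]; ring
lemma pprod_comb2 (u v : Fin 4 → ℝ) (α β : ℝ) :
    pprod (α • u + β • v) (α • u + β • v)
      = α ^ 2 * pprod u u + 2 * α * β * pprod u v + β ^ 2 * pprod v v := by
  simp [pprod]; ring

def Lc (lam : Fin 4 → ℝ) : (Fin 4 → ℝ) →L[ℝ] ℝ :=
  LinearMap.toContinuousLinearMap
    { toFun := fun v => pprod v lam
      map_add' := by intro a b; simp [pprod]; ring
      map_smul' := by intro c a; simp [pprod]; ring }

lemma key (X : ℝ × ℝ → Fin 4 → ℝ) (lam : Fin 4 → ℝ) (p v : ℝ × ℝ)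
    (hX : DifferentiableAt ℝ X p) :
    fderiv ℝ (fun q => pprod (X q) lam) p v = pprod (fderiv ℝ X p v) lam := by
  have h : (fun q => pprod (X q) lam) = (Lc lam) ∘ X := rfl
  rw [h, fderiv_comp p (Lc lam).differentiableAt hX, ContinuousLinearMap.fderiv]
  rfl

lemma cancel_sq {α A B C : ℝ} (hα : α ≠ 0) (h : α * A * (α * B) - (α * C) ^ 2 = 0) :
    A * B - C ^ 2 = 0 := by
  have h2 : α ^ 2 * (A * B - C ^ 2) = 0 := by linear_combination h
  exact (mul_eq_zero.mp h2).resolve_left (pow_ne_zero 2 hα)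

theorem stmt1 (U : Set (ℝ × ℝ)) (X e1 e2 : ℝ × ℝ → Fin 4 → ℝ)
    (hsurf : IsLorentzSurface U X) (hframe : IsNormalFrame U X e1 e2)
    (p₀ : ℝ × ℝ) (hp₀ : p₀ ∈ U)
    (lam : Fin 4 → ℝ) (hlam : lam ≠ 0) (hlight : pprod lam lam = 0) :
    (pdx (fun p => pprod (X p) lam) p₀ = 0 ∧ pdy (fun p => pprod (X p) lam) p₀ = 0 ∧
        detHess (fun p => pprod (X p) lam) p₀ = 0) ↔
      (∃ σ : ℝ, (σ = 1 ∨ σ = -1) ∧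
        (∃ μ : ℝ, μ ≠ 0 ∧ lam = μ • (e1 p₀ + σ • e2 p₀)) ∧ KlVanish X e1 e2 σ p₀) := by
  obtain ⟨hU, hXc, hGsurf⟩ := hsurf
  obtain ⟨-, -, hfr⟩ := hframe
  obtain ⟨h11, h22, h12, h1x, h1y, h2x, h2y⟩ := hfr p₀ hp₀
  have hUnhd : U ∈ nhds p₀ := hU.mem_nhds hp₀
  have hXd : ∀ p ∈ U, DifferentiableAt ℝ X p := fun p hp =>
    (hXc.differentiableOn (by simp)).differentiableAt (hU.mem_nhds hp)
  have hfd : ContDiffOn ℝ (⊤ : ℕ∞) (fderiv ℝ X) U := hXc.fderiv_of_isOpen hU (by simp)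
  have hfda : DifferentiableAt ℝ (fderiv ℝ X) p₀ :=
    (hfd.differentiableOn (by simp)).differentiableAt hUnhd
  have hDxd : DifferentiableAt ℝ (Dx X) p₀ := by
    have h : Dx X = fun p => fderiv ℝ X p (1, 0) := rfl
    rw [h]; exact hfda.clm_apply (differentiableAt_const _)
  have hDyd : DifferentiableAt ℝ (Dy X) p₀ := by
    have h : Dy X = fun p => fderiv ℝ X p (0, 1) := rfl
    rw [h]; exact hfda.clm_apply (differentiableAt_const _)
  have hA : ∀ p ∈ U, pdx (fun q => pprod (X q) lam) p = pprod (Dx X p) lam := fun p hp =>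
    key X lam p (1, 0) (hXd p hp)
  have hB : ∀ p ∈ U, pdy (fun q => pprod (X q) lam) p = pprod (Dy X p) lam := fun p hp =>
    key X lam p (0, 1) (hXd p hp)
  have hevx : pdx (fun q => pprod (X q) lam) =ᶠ[nhds p₀] fun p => pprod (Dx X p) lam :=
    Filter.eventuallyEq_of_mem hUnhd hA
  have hevy : pdy (fun q => pprod (X q) lam) =ᶠ[nhds p₀] fun p => pprod (Dy X p) lam :=
    Filter.eventuallyEq_of_mem hUnhd hB
  have hxx : pdx (pdx (fun q => pprod (X q) lam)) p₀ = pprod (Dxx X p₀) lam := by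
    show fderiv ℝ (pdx fun q => pprod (X q) lam) p₀ (1, 0) = _
    rw [hevx.fderiv_eq]
    exact key (Dx X) lam p₀ (1, 0) hDxd
  have hxy : pdy (pdx (fun q => pprod (X q) lam)) p₀ = pprod (Dxy X p₀) lam := by
    show fderiv ℝ (pdx fun q => pprod (X q) lam) p₀ (0, 1) = _
    rw [hevx.fderiv_eq]
    exact key (Dx X) lam p₀ (0, 1) hDxd
  have hyy : pdy (pdy (fun q => pprod (X q) lam)) p₀ = pprod (Dyy X p₀) lam := by
    show fderiv ℝ (pdy fun q => pprod (X q) lam) p₀ (0, 1) = _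
    rw [hevy.fderiv_eq]
    exact key (Dy X) lam p₀ (0, 1) hDyd
  have hDH : detHess (fun p => pprod (X p) lam) p₀
      = pprod (Dxx X p₀) lam * pprod (Dyy X p₀) lam - (pprod (Dxy X p₀) lam) ^ 2 := by
    unfold detHess
    rw [hxx, hxy, hyy]
  constructor
  · rintro ⟨h1, h2, h3⟩
    rw [hA p₀ hp₀] at h1
    rw [hB p₀ hp₀] at h2
    rw [hDH] at h3
    set α : ℝ := -pprod lam (e1 p₀) with hα
    set β : ℝ := pprod lam (e2 p₀) with hβ
    have hv : lam - α • e1 p₀ - β • e2 p₀ = 0 := by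
      apply span_lemma (Dx X p₀) (Dy X p₀) (e1 p₀) (e2 p₀) _ (hGsurf p₀ hp₀) h11 h22 h12
        h1x h1y h2x h2y
      · rw [pprod_sub_comb, h1x, h2x, pprod_comm, h1]; ring
      · rw [pprod_sub_comb, h1y, h2y, pprod_comm, h2]; ring
      · rw [pprod_sub_comb, h11, pprod_comm (e2 p₀) (e1 p₀), h12, hα]; ring
      · rw [pprod_sub_comb, h22, h12, hβ]; ring
    rw [sub_sub, sub_eq_zero] at hv
    have hll : -α ^ 2 + β ^ 2 = 0 := by
      have h := hlight
      rw [hv, pprod_comb2, h11, h22, h12] at h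
      linarith
    have hα0 : α ≠ 0 := by
      intro h0
      have hβ0 : β = 0 := by
        have hb2 : β ^ 2 = 0 := by rw [h0] at hll; linarith
        exact (pow_eq_zero_iff two_ne_zero).mp hb2
      apply hlam
      rw [hv, h0, hβ0]
      simp
    have hcases : β = α ∨ β = -α := by
      have hfac : (β - α) * (β + α) = 0 := by linear_combination hll
      rcases mul_eq_zero.mp hfac with h | h
      · left; linarith
      · right; linarith
    obtain hβα | hβα := hcases
    · have hl2 : lam = α • (e1 p₀ + (1 : ℝ) • e2 p₀) := by
        rw [hv, hβα, one_smul, smul_add]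
      refine ⟨1, Or.inl rfl, ⟨α, hα0, hl2⟩, ?_⟩
      unfold KlVanish
      rw [hl2] at h3
      simp only [pprod_smul_right] at h3
      exact cancel_sq hα0 h3
    · have hl2 : lam = α • (e1 p₀ + (-1 : ℝ) • e2 p₀) := by
        rw [hv, hβα, smul_add, smul_smul]
        norm_num
      refine ⟨-1, Or.inr rfl, ⟨α, hα0, hl2⟩, ?_⟩
      unfold KlVanish
      rw [hl2] at h3
      simp only [pprod_smul_right] at h3
      exact cancel_sq hα0 h3
  · rintro ⟨σ, hσ, ⟨μ, hμ, hle⟩, hKl⟩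
    refine ⟨?_, ?_, ?_⟩
    · rw [hA p₀ hp₀, hle, pprod_right_comb,
        pprod_comm (Dx X p₀) (e1 p₀), pprod_comm (Dx X p₀) (e2 p₀), h1x, h2x]
      ring
    · rw [hB p₀ hp₀, hle, pprod_right_comb,
        pprod_comm (Dy X p₀) (e1 p₀), pprod_comm (Dy X p₀) (e2 p₀), h1y, h2y]
      ring
    · rw [hDH, hle]
      simp only [pprod_smul_right]
      unfold KlVanish at hKl
      linear_combination μ ^ 2 * hKl
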